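/- arXiv:1304.4648 — 11 statements merged into one kernel-verified Lean document; each statement's English description precedes it below -/
import Mathlib

section
/- Theorem 3.2(1): Let p be an odd prime, let k₁, k₂, k₃, m₁, m₂ be natural numbers, n = k₁ + k₂ + k₃ + m₁ + m₂ and k = k₁ + k₂ + k₃. Let A₁ (size k₁×k₃), B₁ (k₁×k₂), A₂, B₂ (k₁×m₁), A₃, B₃ (k₁×m₂), A₄ (k₂×m₁), B₄ (k₃×m₂) be matrices over F_p, regarded as matrices over R via c ↦ (c,c). Let C be the R-submodule of R^n generated by the rows of the block matrix G with column blocks of sizes k₁, k₂, k₃, m₁, m₂ and row blocks of sizes k₁, k₂, k₃: G = [ I_{k₁} | (1-v)B₁ | vA₁ | vA₂+(1-v)B₂ | vA₃+(1-v)B₃ ; 0 | vI_{k₂} | 0 | vA₄ | 0 ; 0 | 0 | (1-v)I_{k₃} | 0 | (1-v)B₄ ]. Set E₁ = (−A₂ | A₁B₄ − A₃)ᵀ and E₂ = (B₁A₄ − B₂ | −B₃)ᵀ (each of size (n−k)×k₁, the transpose of a horizontal concatenation), P = (−A₄ | 0)ᵀ of size (n−k)×k₂, Q = (0 | −B₄)ᵀ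 of size (n−k)×k₃. Then the dual code C^⊥ equals the R-submodule of R^n generated by the rows of the block matrix H with column blocks of sizes k₁, k₂, k₃, n−k and row blocks of sizes n−k, k₃, k₂: H = [ vE₁+(1-v)E₂ | P | Q | I_{n−k} ; v(−A₁ᵀ) | 0 | vI_{k₃} | 0 ; (1-v)(−B₁ᵀ) | (1-v)I_{k₂} | 0 | 0 ]. -/
open Matrix

/-- The Euclidean dual of a linear code. -/
def dualCode {S : Type*} [CommRing S] {ι : Type*} [Fintype ι]
    (C : Submodule S (ι → S)) : Submodule S (ι → S) where
  carrier := {u | ∀ w ∈ C, ∑ i, u i * w i = 0}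
  zero_mem' := by intro w hw; simp
  add_mem' := by
    intro a b ha hb w hw
    simp only [Set.mem_setOf_eq] at ha hb ⊢
    simp only [Pi.add_apply, add_mul, Finset.sum_add_distrib, ha w hw, hb w hw, add_zero]
  smul_mem' := by
    intro c a ha w hw
    simp only [Set.mem_setOf_eq] at ha ⊢
    simp only [Pi.smul_apply, smul_eq_mul, mul_assoc, ← Finset.mul_sum, ha w hw, mul_zero]

variable (p : ℕ)

/-- `F_p → R = F_p × F_p`, `c ↦ (c, c)`. -/
def eR : ZMod p → ZMod p × ZMod p := fun c => (c, c)

/-- `v = (0, 1)`. -/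
def vR : ZMod p × ZMod p := (0, 1)

/-- `1 - v = (1, 0)`. -/
def uR : ZMod p × ZMod p := (1, 0)

variable {k₁ k₂ k₃ m₁ m₂ : ℕ}
  (A₁ : Matrix (Fin k₁) (Fin k₃) (ZMod p)) (B₁ : Matrix (Fin k₁) (Fin k₂) (ZMod p))
  (A₂ B₂ : Matrix (Fin k₁) (Fin m₁) (ZMod p)) (A₃ B₃ : Matrix (Fin k₁) (Fin m₂) (ZMod p))
  (A₄ : Matrix (Fin k₂) (Fin m₁) (ZMod p)) (B₄ : Matrix (Fin k₃) (Fin m₂) (ZMod p))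

/-- The generator matrix
`G = [ I | (1-v)B₁ | vA₁ | vA₂+(1-v)B₂ | vA₃+(1-v)B₃ ; 0 | vI | 0 | vA₄ | 0 ;
  0 | 0 | (1-v)I | 0 | (1-v)B₄ ]`, with column blocks of sizes `k₁, k₂, k₃, m₁, m₂` and row
blocks of sizes `k₁, k₂, k₃`. -/
def Gmat : Matrix (Fin k₁ ⊕ Fin k₂ ⊕ Fin k₃)
    (Fin k₁ ⊕ Fin k₂ ⊕ Fin k₃ ⊕ Fin m₁ ⊕ Fin m₂) (ZMod p × ZMod p) :=
  Matrix.of fun r c =>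
    match r, c with
    | .inl i, .inl j => if i = j then 1 else 0
    | .inl i, .inr (.inl j) => uR p * eR p (B₁ i j)
    | .inl i, .inr (.inr (.inl j)) => vR p * eR p (A₁ i j)
    | .inl i, .inr (.inr (.inr (.inl j))) => vR p * eR p (A₂ i j) + uR p * eR p (B₂ i j)
    | .inl i, .inr (.inr (.inr (.inr j))) => vR p * eR p (A₃ i j) + uR p * eR p (B₃ i j)
    | .inr (.inl _), .inl _ => 0
    | .inr (.inl i), .inr (.inl j) => if i = j then vR p else 0
    | .inr (.inl _), .inr (.inr (.inl _)) => 0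
    | .inr (.inl i), .inr (.inr (.inr (.inl j))) => vR p * eR p (A₄ i j)
    | .inr (.inl _), .inr (.inr (.inr (.inr _))) => 0
    | .inr (.inr _), .inl _ => 0
    | .inr (.inr _), .inr (.inl _) => 0
    | .inr (.inr i), .inr (.inr (.inl j)) => if i = j then uR p else 0
    | .inr (.inr _), .inr (.inr (.inr (.inl _))) => 0
    | .inr (.inr i), .inr (.inr (.inr (.inr j))) => uR p * eR p (B₄ i j)

/-- `E₁ = (−A₂ | A₁B₄ − A₃)ᵀ`. -/
def E₁mat : Matrix (Fin m₁ ⊕ Fin m₂) (Fin k₁) (ZMod p) :=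
  (Matrix.fromCols (-A₂) (A₁ * B₄ - A₃))ᵀ

/-- `E₂ = (B₁A₄ − B₂ | −B₃)ᵀ`. -/
def E₂mat : Matrix (Fin m₁ ⊕ Fin m₂) (Fin k₁) (ZMod p) :=
  (Matrix.fromCols (B₁ * A₄ - B₂) (-B₃))ᵀ

/-- `P = (−A₄ | 0)ᵀ`. -/
def Pmat : Matrix (Fin m₁ ⊕ Fin m₂) (Fin k₂) (ZMod p) :=
  (Matrix.fromCols (-A₄) (0 : Matrix (Fin k₂) (Fin m₂) (ZMod p)))ᵀ

/-- `Q = (0 | −B₄)ᵀ`. -/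
def Qmat : Matrix (Fin m₁ ⊕ Fin m₂) (Fin k₃) (ZMod p) :=
  (Matrix.fromCols (0 : Matrix (Fin k₃) (Fin m₁) (ZMod p)) (-B₄))ᵀ

/-- The parity check matrix
`H = [ vE₁+(1-v)E₂ | P | Q | I ; v(−A₁ᵀ) | 0 | vI | 0 ; (1-v)(−B₁ᵀ) | (1-v)I | 0 | 0 ]`,
with column blocks of sizes `k₁, k₂, k₃, n−k = m₁+m₂` and row blocks of sizes
`n−k = m₁+m₂, k₃, k₂`. -/
def Hmat : Matrix ((Fin m₁ ⊕ Fin m₂) ⊕ Fin k₃ ⊕ Fin k₂)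
    (Fin k₁ ⊕ Fin k₂ ⊕ Fin k₃ ⊕ Fin m₁ ⊕ Fin m₂) (ZMod p × ZMod p) :=
  Matrix.of fun r c =>
    match r, c with
    | .inl s, .inl j =>
        vR p * eR p (E₁mat p A₁ A₂ A₃ B₄ s j) + uR p * eR p (E₂mat p B₁ B₂ B₃ A₄ s j)
    | .inl s, .inr (.inl j) => eR p (Pmat p A₄ s j)
    | .inl s, .inr (.inr (.inl j)) => eR p (Qmat p B₄ s j)
    | .inl s, .inr (.inr (.inr (.inl t))) => if s = Sum.inl t then 1 else 0
    | .inl s, .inr (.inr (.inr (.inr t))) => if s = Sum.inr t then 1 else 0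
    | .inr (.inl i), .inl j => vR p * eR p ((-A₁ᵀ) i j)
    | .inr (.inl _), .inr (.inl _) => 0
    | .inr (.inl i), .inr (.inr (.inl j)) => if i = j then vR p else 0
    | .inr (.inl _), .inr (.inr (.inr _)) => 0
    | .inr (.inr i), .inl j => uR p * eR p ((-B₁ᵀ) i j)
    | .inr (.inr i), .inr (.inl j) => if i = j then uR p else 0
    | .inr (.inr _), .inr (.inr _) => 0

/-!
Every row of `H` is orthogonal to every row of `G`, i.e. `G * Hᵀ = 0`, so the rows of `H` span a
subcode of `C^⊥`. Conversely, if `G x = 0`, then `x` is the combination of the rows of `H` whose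
coefficients are read off from the identity blocks of `H`: the `m`-coordinates of `x` for the first
row block, and `x_{k₃} + B₄ x_{m₂}`, `x_{k₂} + A₄ x_{m₁}` for the other two. The parity-check
equations `G x = 0` then make the remaining coordinates match; in the first column block this also
uses associativity, `(B₁ A₄) x_{m₁} = B₁ (A₄ x_{m₁})` and `(A₁ B₄) x_{m₂} = A₁ (B₄ x_{m₂})`.
-/

section DualOfRowSpan

variable {S ι κ ν : Type*} [CommRing S] [Fintype ι] [Fintype κ] [Fintype ν]

theorem mem_dualCode_span_range_row_iff (M : Matrix κ ι S) (x : ι → S) :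
    x ∈ dualCode (Submodule.span S (Set.range M.row)) ↔ M *ᵥ x = 0 := by
  refine ⟨fun hx => funext fun r => (dotProduct_comm _ _).trans
    (hx _ (Submodule.subset_span ⟨r, rfl⟩)), fun hx => ?_⟩
  rw [← range_vecMulLinear]
  rintro _ ⟨y, rfl⟩
  change x ⬝ᵥ (y ᵥ* M) = 0
  rw [dotProduct_comm, ← Matrix.dotProduct_mulVec, hx, dotProduct_zero]

theorem dualCode_span_range_row_eq {G : Matrix κ ι S} {H : Matrix ν ι S} (hGH : G * Hᵀ = 0)
    (hspan : ∀ x, G *ᵥ x = 0 → ∃ y, y ᵥ* H = x) :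
    dualCode (Submodule.span S (Set.range G.row)) = Submodule.span S (Set.range H.row) := by
  ext x
  rw [mem_dualCode_span_range_row_iff, ← range_vecMulLinear]
  refine ⟨hspan x, ?_⟩
  rintro ⟨y, rfl⟩
  rw [Matrix.vecMulLinear_apply, ← Matrix.mulVec_transpose, Matrix.mulVec_mulVec, hGH,
    Matrix.zero_mulVec]

end DualOfRowSpan

theorem Gmat_mul_Hmat_transpose :
    Gmat p A₁ B₁ A₂ B₂ A₃ B₃ A₄ B₄ * (Hmat p A₁ B₁ A₂ B₂ A₃ B₃ A₄ B₄)ᵀ = 0 := by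
  ext r r' : 1
  rcases r with i | i | i <;> rcases r' with (s | s) | s | s <;>
    simp [Matrix.mul_apply, Fintype.sum_sum_type, Gmat, Hmat, E₁mat, E₂mat, Pmat, Qmat, vR, uR, eR,
      Prod.ext_iff, Prod.fst_sum, Prod.snd_sum]

def dualCoeffs (x : (Fin k₁ ⊕ Fin k₂ ⊕ Fin k₃ ⊕ Fin m₁ ⊕ Fin m₂) → ZMod p × ZMod p) :
    ((Fin m₁ ⊕ Fin m₂) ⊕ Fin k₃ ⊕ Fin k₂) → ZMod p × ZMod p :=
  Sum.elim (Sum.elim (fun t => x (.inr (.inr (.inr (.inl t)))))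
      (fun t => x (.inr (.inr (.inr (.inr t))))))
    (Sum.elim
      (fun i => x (.inr (.inr (.inl i))) + ∑ t, eR p (B₄ i t) * x (.inr (.inr (.inr (.inr t)))))
      (fun i => x (.inr (.inl i)) + ∑ t, eR p (A₄ i t) * x (.inr (.inr (.inr (.inl t))))))

set_option maxHeartbeats 1000000 in
theorem dualCoeffs_vecMul_Hmat
    (x : (Fin k₁ ⊕ Fin k₂ ⊕ Fin k₃ ⊕ Fin m₁ ⊕ Fin m₂) → ZMod p × ZMod p)
    (hx : Gmat p A₁ B₁ A₂ B₂ A₃ B₃ A₄ B₄ *ᵥ x = 0) :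
    dualCoeffs p A₄ B₄ x ᵥ* Hmat p A₁ B₁ A₂ B₂ A₃ B₃ A₄ B₄ = x := by
  have hk₁ (i) := congrFun hx (.inl i)
  have hk₂ (i) := congrFun hx (.inr (.inl i))
  have hk₃ (i) := congrFun hx (.inr (.inr i))
  have hBA (i) :=
    congrFun (Matrix.mulVec_mulVec (fun t => (x (.inr (.inr (.inr (.inl t))))).1) B₁ A₄) i
  have hAB (i) :=
    congrFun (Matrix.mulVec_mulVec (fun t => (x (.inr (.inr (.inr (.inr t))))).2) A₁ B₄) i
  simp [Matrix.mulVec, dotProduct, Fintype.sum_sum_type, Gmat, vR, uR, eR, Prod.ext_iff,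
    Prod.fst_sum, Prod.snd_sum, Finset.mul_sum, mul_comm] at hk₁ hk₂ hk₃ hBA hAB
  funext j
  rcases j with j | j | j | j | j <;>
    simp [Matrix.vecMul, dotProduct, Fintype.sum_sum_type, dualCoeffs, Hmat, E₁mat, E₂mat, Pmat,
      Qmat, vR, uR, eR, Prod.ext_iff, Prod.fst_sum, Prod.snd_sum, mul_add, sub_mul, Finset.mul_sum,
      Finset.sum_add_distrib, Finset.sum_sub_distrib, mul_comm, mul_left_comm]
  · exact ⟨by linear_combination -(hk₁ j).1 - hBA j,
      by linear_combination -(hk₁ j).2 - hAB j⟩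
  · linear_combination -hk₂ j
  · linear_combination -hk₃ j

theorem dual_of_code_gen_by_G :
    dualCode (Submodule.span (ZMod p × ZMod p)
        (Set.range fun r j => Gmat p A₁ B₁ A₂ B₂ A₃ B₃ A₄ B₄ r j)) =
      Submodule.span (ZMod p × ZMod p)
        (Set.range fun r j => Hmat p A₁ B₁ A₂ B₂ A₃ B₃ A₄ B₄ r j) :=
  dualCode_span_range_row_eq (Gmat_mul_Hmat_transpose p A₁ B₁ A₂ B₂ A₃ B₃ A₄ B₄)
    fun x hx => ⟨_, dualCoeffs_vecMul_Hmat p A₁ B₁ A₂ B₂ A₃ B₃ A₄ B₄ x hx⟩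
end

section
/- Theorem 3.2(3), first identity: For every linear code C of length n over R = F_p + vF_p, the dual (taken in F_p^n) of the torsion code (C : v)^ equals the torsion code (C^⊥ : v)^ of the dual code; that is, ((C : v)^)^⊥ = (C^⊥ : v)^. -/
/-- Theorem 3.2(3), first identity: for every linear code `C` of length `n` over
`R = F_p + vF_p` (realized as `(ZMod p) × (ZMod p)` with `v = (0,1)`), the dual in `F_p^n`
of the torsion code `(C : v)^` equals the torsion code `(C^⊥ : v)^` of the dual code. -/
theorem dual_of_torsion_hat (p n : ℕ) (hp : p.Prime)
    (C : Submodule (ZMod p × ZMod p) (Fin n → ZMod p × ZMod p)) :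
    {u : Fin n → ZMod p | ∀ w ∈ (fun x : Fin n → ZMod p × ZMod p => fun i => (x i).2) ''
          {x : Fin n → ZMod p × ZMod p | ((0, 1) : ZMod p × ZMod p) • x ∈ C},
        ∑ i, u i * w i = 0} =
      (fun x : Fin n → ZMod p × ZMod p => fun i => (x i).2) ''
        {x : Fin n → ZMod p × ZMod p | ((0, 1) : ZMod p × ZMod p) • x ∈ dualCode C} := by
  ext u
  simp only [Set.mem_setOf_eq, Set.mem_image]
  constructor
  · intro h
    refine ⟨fun i => (0, u i), ?_, rfl⟩
    intro w hw
    have hmem : ((0, 1) : ZMod p × ZMod p) • (((0, 1) : ZMod p × ZMod p) • w) ∈ C := by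
      rw [smul_smul]
      simpa using C.smul_mem (0, 1) hw
    have h2 := h (fun i => (w i).2) ⟨((0, 1) : ZMod p × ZMod p) • w, hmem, by
      funext i
      simp [Prod.smul_def, smul_eq_mul]⟩
    have : (∑ i, (((0, 1) : ZMod p × ZMod p) • fun i => ((0 : ZMod p), u i)) i * w i)
        = (0, ∑ i, u i * (w i).2) := by
      rw [Prod.ext_iff]
      simp [Prod.fst_sum, Prod.snd_sum, smul_eq_mul]
    rw [this, h2]
    rfl
  · rintro ⟨x, hx, rfl⟩ w ⟨y, hy, rfl⟩
    have h3 := hx _ hy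
    have : (∑ i, (((0, 1) : ZMod p × ZMod p) • x) i * (((0, 1) : ZMod p × ZMod p) • y) i)
        = (0, ∑ i, (x i).2 * (y i).2) := by
      rw [Prod.ext_iff]
      simp [Prod.fst_sum, Prod.snd_sum, smul_eq_mul]
    rw [this] at h3
    exact congrArg Prod.snd h3
end

section
/- Theorem 3.2(3), second identity: For every linear code C of length n over R = F_p + vF_p, the dual (taken in F_p^n) of the torsion code (C : (1-v))‾ equals the torsion code (C^⊥ : (1-v))‾ of the dual code; that is, ((C : (1-v))‾)^⊥ = (C^⊥ : (1-v))‾. -/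
/-- Theorem 3.2(3), second identity: for every linear code `C` of length `n` over
`R = F_p + vF_p` (realized as `(ZMod p) × (ZMod p)` with `1 - v = (1,0)`), the dual in
`F_p^n` of the torsion code `(C : (1-v))‾` equals the torsion code `(C^⊥ : (1-v))‾`
of the dual code. -/
theorem dual_of_torsion_bar (p n : ℕ) (hp : p.Prime)
    (C : Submodule (ZMod p × ZMod p) (Fin n → ZMod p × ZMod p)) :
    {u : Fin n → ZMod p | ∀ w ∈ (fun x : Fin n → ZMod p × ZMod p => fun i => (x i).1) ''
          {x : Fin n → ZMod p × ZMod p | ((1, 0) : ZMod p × ZMod p) • x ∈ C},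
        ∑ i, u i * w i = 0} =
      (fun x : Fin n → ZMod p × ZMod p => fun i => (x i).1) ''
        {x : Fin n → ZMod p × ZMod p | ((1, 0) : ZMod p × ZMod p) • x ∈ dualCode C} := by
  ext u
  simp only [Set.mem_setOf_eq, Set.mem_image]
  constructor
  · intro h
    refine ⟨fun i => (u i, 0), ?_, by funext i; rfl⟩
    show ((1, 0) : ZMod p × ZMod p) • _ ∈ dualCode C
    intro w hw
    have hb := h (fun i => (w i).1) ⟨w, C.smul_mem _ hw, rfl⟩
    simp only [Pi.smul_apply, smul_eq_mul, Prod.mk_mul_mk, one_mul, zero_mul,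
      Prod.ext_iff, Prod.fst_sum, Prod.snd_sum, Prod.fst_zero, Prod.snd_zero]
    constructor
    · simpa using hb
    · simp
  · rintro ⟨x, hx, rfl⟩ w ⟨y, hy, rfl⟩
    have := hx ((1, 0) • y) hy
    have h1 := congrArg Prod.fst this
    simpa [Prod.fst_sum] using h1
end

section
/- Corollary 3.3: A linear code C of length n over R = F_p + vF_p is self-dual if and only if (i) C is self-orthogonal and (ii) dim_{F_p} C₁ = dim_{F_p} C₂ and 2·dim_{F_p} C₂ = n. -/
/-- The image of an `F_p` vector in `R^n`, `x̂ i = (x i, x i)`. -/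
def emb {p n : ℕ} (x : Fin n → ZMod p) : Fin n → ZMod p × ZMod p := fun i => (x i, x i)

/-- `C₁ = {a ∈ F_p^n | a + vb ∈ C for some b}`. -/
def codeC1 {p n : ℕ} (C : Submodule (ZMod p × ZMod p) (Fin n → ZMod p × ZMod p)) :
    Submodule (ZMod p) (Fin n → ZMod p) where
  carrier := {a | ∃ b : Fin n → ZMod p, (fun i => (a i, a i + b i)) ∈ C}
  zero_mem' := by
    refine ⟨0, ?_⟩
    convert C.zero_mem using 1
    funext i; simp
  add_mem' := by
    rintro a a' ⟨b, hb⟩ ⟨b', hb'⟩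
    refine ⟨b + b', ?_⟩
    convert C.add_mem hb hb' using 1
    funext i
    simp [Prod.ext_iff]; ring
  smul_mem' := by
    rintro c a ⟨b, hb⟩
    refine ⟨c • b, ?_⟩
    convert C.smul_mem ((c, c) : ZMod p × ZMod p) hb using 1
    funext i
    simp [Prod.ext_iff, Prod.smul_def, smul_eq_mul]; ring

/-- `C₂ = {a + b ∈ F_p^n | a + vb ∈ C}`. -/
def codeC2 {p n : ℕ} (C : Submodule (ZMod p × ZMod p) (Fin n → ZMod p × ZMod p)) :
    Submodule (ZMod p) (Fin n → ZMod p) where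
  carrier := {s | ∃ a b : Fin n → ZMod p, (fun i => (a i, a i + b i)) ∈ C ∧ s = a + b}
  zero_mem' := by
    refine ⟨0, 0, ?_, by simp⟩
    convert C.zero_mem using 1
    funext i; simp
  add_mem' := by
    rintro s s' ⟨a, b, hb, rfl⟩ ⟨a', b', hb', rfl⟩
    refine ⟨a + a', b + b', ?_, by abel⟩
    convert C.add_mem hb hb' using 1
    funext i
    simp [Prod.ext_iff]; ring
  smul_mem' := by
    rintro c s ⟨a, b, hb, rfl⟩
    refine ⟨c • a, c • b, ?_, by simp [smul_add]⟩
    convert C.smul_mem ((c, c) : ZMod p × ZMod p) hb using 1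
    funext i
    simp [Prod.ext_iff, Prod.smul_def, smul_eq_mul]; ring

/-!
The idempotents `(1, 0)` and `(0, 1)` of `R = F_p × F_p` split a code `C` over `R` into the
product of its components `C₁` and `C₂`; since the inner product is computed componentwise,
`C^⊥` is the product of `C₁^⊥` and `C₂^⊥`. So `C` is self-orthogonal (self-dual) iff both
components are, and over a field a self-orthogonal code `A` is self-dual iff `2 dim A = n`,
because `dim A + dim A^⊥ = n`.
-/

theorem mem_dualCode {S ι : Type*} [CommRing S] [Fintype ι] {C : Submodule S (ι → S)}
    {u : ι → S} : u ∈ dualCode C ↔ ∀ w ∈ C, ∑ i, u i * w i = 0 :=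
  Iff.rfl

section Field

variable {K ι : Type*} [Field K] [Fintype ι]

open Module

theorem finrank_dualCode_add_finrank (A : Submodule K (ι → K)) :
    finrank K (dualCode A) + finrank K A = Fintype.card ι := by
  classical
  have hdual : dualCode A = A.dualAnnihilator.comap (dotProductEquiv K ι).toLinearMap := by
    ext; simp [mem_dualCode, Submodule.mem_dualAnnihilator, dotProduct]
  rw [hdual, Submodule.comap_equiv_eq_map_symm, LinearEquiv.finrank_map_eq, add_comm,
    Subspace.finrank_add_finrank_dualAnnihilator_eq, finrank_fintype_fun_eq_card]

theorem eq_dualCode_iff (A : Submodule K (ι → K)) :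
    A = dualCode A ↔ A ≤ dualCode A ∧ 2 * finrank K A = Fintype.card ι := by
  have hdim := finrank_dualCode_add_finrank A
  refine ⟨fun h => ⟨h.le, by rw [← h] at hdim; omega⟩, fun ⟨hle, h⟩ => ?_⟩
  exact Submodule.eq_of_le_of_finrank_eq hle (by omega)

end Field

theorem le_iff_of_mem_iff {S ι : Type*} [CommRing S] {D E : Submodule (S × S) (ι → S × S)}
    {D₁ D₂ E₁ E₂ : Submodule S (ι → S)}
    (hD : ∀ u, u ∈ D ↔ (fun i => (u i).1) ∈ D₁ ∧ (fun i => (u i).2) ∈ D₂)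
    (hE : ∀ u, u ∈ E ↔ (fun i => (u i).1) ∈ E₁ ∧ (fun i => (u i).2) ∈ E₂) :
    D ≤ E ↔ D₁ ≤ E₁ ∧ D₂ ≤ E₂ := by
  refine ⟨fun h => ⟨fun a ha => ?_, fun b hb => ?_⟩, fun ⟨h₁, h₂⟩ u hu => ?_⟩
  · exact ((hE fun i => (a i, 0)).1 (h ((hD _).2 ⟨ha, D₂.zero_mem⟩))).1
  · exact ((hE fun i => (0, b i)).1 (h ((hD _).2 ⟨D₁.zero_mem, hb⟩))).2
  · rw [hD] at hu
    exact (hE u).2 ⟨h₁ hu.1, h₂ hu.2⟩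

section Decomposition

variable {p n : ℕ} (C : Submodule (ZMod p × ZMod p) (Fin n → ZMod p × ZMod p))

theorem mem_codeC1 {a : Fin n → ZMod p} :
    a ∈ codeC1 C ↔ ∃ u ∈ C, (fun i => (u i).1) = a := by
  refine ⟨fun ⟨b, hb⟩ => ⟨_, hb, rfl⟩, fun ⟨u, hu, h⟩ => ⟨fun i => (u i).2 - a i, ?_⟩⟩
  convert hu using 2 with i
  simp [← h]

theorem mem_codeC2 {s : Fin n → ZMod p} :
    s ∈ codeC2 C ↔ ∃ u ∈ C, (fun i => (u i).2) = s := by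
  refine ⟨fun ⟨a, b, hab, hs⟩ => ⟨_, hab, hs ▸ rfl⟩, fun ⟨u, hu, h⟩ => ?_⟩
  refine ⟨fun i => (u i).1, fun i => (u i).2 - (u i).1, ?_, ?_⟩
  · convert hu using 2 with i
    simp
  · subst h
    ext i
    simp

theorem mem_iff_mem_codeC1_and_mem_codeC2 (u : Fin n → ZMod p × ZMod p) :
    u ∈ C ↔ (fun i => (u i).1) ∈ codeC1 C ∧ (fun i => (u i).2) ∈ codeC2 C := by
  refine ⟨fun hu => ⟨(mem_codeC1 C).2 ⟨u, hu, rfl⟩, (mem_codeC2 C).2 ⟨u, hu, rfl⟩⟩, ?_⟩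
  rintro ⟨h₁, h₂⟩
  obtain ⟨x, hx, hx₁⟩ := (mem_codeC1 C).1 h₁
  obtain ⟨y, hy, hy₂⟩ := (mem_codeC2 C).1 h₂
  convert C.add_mem (C.smul_mem (1, 0) hx) (C.smul_mem (0, 1) hy) using 1
  ext i
  · simp [← congrFun hx₁ i]
  · simp [← congrFun hy₂ i]

theorem sum_mul_eq_prod {S T ι : Type*} [CommRing S] [CommRing T] [Fintype ι]
    (u w : ι → S × T) :
    ∑ i, u i * w i = (∑ i, (u i).1 * (w i).1, ∑ i, (u i).2 * (w i).2) :=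
  Prod.ext (by simp [Prod.fst_sum]) (by simp [Prod.snd_sum])

theorem mem_dualCode_iff_mem_dualCode_codeC1_and_codeC2 (u : Fin n → ZMod p × ZMod p) :
    u ∈ dualCode C ↔
      (fun i => (u i).1) ∈ dualCode (codeC1 C) ∧ (fun i => (u i).2) ∈ dualCode (codeC2 C) := by
  simp only [mem_dualCode, mem_codeC1, mem_codeC2, sum_mul_eq_prod, Prod.mk_eq_zero,
    forall_exists_index, and_imp, forall_apply_eq_imp_iff₂]
  exact forall₂_and

theorem le_dualCode_iff_codeC1_codeC2 :
    C ≤ dualCode C ↔ codeC1 C ≤ dualCode (codeC1 C) ∧ codeC2 C ≤ dualCode (codeC2 C) :=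
  le_iff_of_mem_iff (mem_iff_mem_codeC1_and_mem_codeC2 C)
    (mem_dualCode_iff_mem_dualCode_codeC1_and_codeC2 C)

theorem eq_dualCode_iff_codeC1_codeC2 :
    C = dualCode C ↔ codeC1 C = dualCode (codeC1 C) ∧ codeC2 C = dualCode (codeC2 C) := by
  have hC := mem_iff_mem_codeC1_and_mem_codeC2 C
  have hdual := mem_dualCode_iff_mem_dualCode_codeC1_and_codeC2 C
  simp only [le_antisymm_iff, le_iff_of_mem_iff hC hdual, le_iff_of_mem_iff hdual hC]
  tauto

end Decomposition

/-- Corollary 3.3: a linear code `C` of length `n` over `R = F_p + vF_p` is self-dual iff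
(i) `C` is self-orthogonal and (ii) `dim C₁ = dim C₂` and `2 · dim C₂ = n`
(equivalently, `n = 2(k₁+k₂)` and `k₂ = k₃`). -/
theorem selfDual_iff_selfOrthogonal_and_dims (p n : ℕ) [Fact p.Prime]
    (C : Submodule (ZMod p × ZMod p) (Fin n → ZMod p × ZMod p)) :
    C = dualCode C ↔
      (C ≤ dualCode C ∧
        Module.finrank (ZMod p) (codeC1 C) = Module.finrank (ZMod p) (codeC2 C) ∧
        2 * Module.finrank (ZMod p) (codeC2 C) = n) := by
  rw [eq_dualCode_iff_codeC1_codeC2, le_dualCode_iff_codeC1_codeC2, eq_dualCode_iff (codeC1 C),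
    eq_dualCode_iff (codeC2 C), Fintype.card_fin]
  constructor
  · rintro ⟨⟨le₁, dim₁⟩, le₂, dim₂⟩
    exact ⟨⟨le₁, le₂⟩, by omega, dim₂⟩
  · rintro ⟨⟨le₁, le₂⟩, hdim, dim₂⟩
    exact ⟨⟨le₁, by omega⟩, le₂, dim₂⟩
end

section
/- Theorem 3.4, first part: Every linear code C of length n over R = F_p + vF_p decomposes uniquely as C = vC₂ ⊕ (1-v)C₁; precisely, C = {v·ŷ + (1-v)·x̂ : x ∈ C₁, y ∈ C₂}, and the representation is unique: if v·ŷ + (1-v)·x̂ = v·ŷ' + (1-v)·x̂' with x, x' ∈ C₁ and y, y' ∈ C₂, then x = x' and y = y'. -/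
/-- Theorem 3.4, first part: every linear code `C` of length `n` over `R = F_p + vF_p`
decomposes uniquely as `C = vC₂ ⊕ (1-v)C₁`: as a set,
`C = {v·ŷ + (1-v)·x̂ | x ∈ C₁, y ∈ C₂}`, and the representation is unique. -/
theorem code_eq_decomposition (p n : ℕ) (hp : p.Prime)
    (C : Submodule (ZMod p × ZMod p) (Fin n → ZMod p × ZMod p)) :
    ((C : Set (Fin n → ZMod p × ZMod p)) =
        {z | ∃ x ∈ codeC1 C, ∃ y ∈ codeC2 C,
          z = ((0, 1) : ZMod p × ZMod p) • emb y + ((1, 0) : ZMod p × ZMod p) • emb x}) ∧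
      ∀ x ∈ codeC1 C, ∀ x' ∈ codeC1 C, ∀ y ∈ codeC2 C, ∀ y' ∈ codeC2 C,
        ((0, 1) : ZMod p × ZMod p) • emb y + ((1, 0) : ZMod p × ZMod p) • emb x =
            ((0, 1) : ZMod p × ZMod p) • emb y' + ((1, 0) : ZMod p × ZMod p) • emb x' →
          x = x' ∧ y = y' := by
  constructor
  · ext z
    simp only [Set.mem_setOf_eq, SetLike.mem_coe]
    constructor
    · intro hz
      refine ⟨fun i => (z i).1, ⟨fun i => (z i).2 - (z i).1, ?_⟩,
        fun i => (z i).2, ⟨fun i => (z i).1, fun i => (z i).2 - (z i).1, ?_, by funext i; simp⟩, ?_⟩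
      · convert hz using 1; funext i; simp
      · convert hz using 1; funext i; simp
      · funext i
        simp [emb, Prod.smul_def, Prod.ext_iff, smul_eq_mul]
    · rintro ⟨x, ⟨b, hb⟩, y, ⟨a, b', hab, rfl⟩, rfl⟩
      have h := C.add_mem (C.smul_mem ((1,0) : ZMod p × ZMod p) hb)
        (C.smul_mem ((0,1) : ZMod p × ZMod p) hab)
      convert h using 1
      funext i
      simp [emb, Prod.smul_def, Prod.ext_iff, smul_eq_mul]
      try abel
  · intro x hx x' hx' y hy y' hy' h
    have hfun : ∀ i, (x i, y i) = (x' i, y' i) := by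
      intro i
      have := congrFun h i
      simpa [emb, Prod.smul_def, Prod.ext_iff, smul_eq_mul] using this
    constructor
    · funext i; exact (Prod.ext_iff.mp (hfun i)).1
    · funext i; exact (Prod.ext_iff.mp (hfun i)).2
end

section
/- Theorem 3.4, second part: For every linear code C of length n over R = F_p + vF_p, the dual code decomposes as C^⊥ = vC₂^⊥ ⊕ (1-v)C₁^⊥; precisely, C^⊥ = {v·ŷ + (1-v)·x̂ : x ∈ C₁^⊥, y ∈ C₂^⊥}, where C₁^⊥ and C₂^⊥ are the duals in F_p^n of C₁ and C₂. -/
/-- Theorem 3.4, second part: for every linear code `C` of length `n` over `R = F_p + vF_p`,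
the dual code decomposes as `C^⊥ = vC₂^⊥ ⊕ (1-v)C₁^⊥`: as a set,
`C^⊥ = {v·ŷ + (1-v)·x̂ | x ∈ C₁^⊥, y ∈ C₂^⊥}`. -/
theorem dual_eq_decomposition (p n : ℕ) (hp : p.Prime)
    (C : Submodule (ZMod p × ZMod p) (Fin n → ZMod p × ZMod p)) :
    (dualCode C : Set (Fin n → ZMod p × ZMod p)) =
      {z | ∃ x ∈ dualCode (codeC1 C), ∃ y ∈ dualCode (codeC2 C),
        z = ((0, 1) : ZMod p × ZMod p) • emb y + ((1, 0) : ZMod p × ZMod p) • emb x} := by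
  have memdual : ∀ {S : Type} [CommRing S] (D : Submodule S (Fin n → S)) (u : Fin n → S),
      u ∈ dualCode D ↔ ∀ w ∈ D, ∑ i, u i * w i = 0 := fun _ _ => Iff.rfl
  ext z
  simp only [SetLike.mem_coe, Set.mem_setOf_eq]
  constructor
  · intro hz
    refine ⟨fun i => (z i).1, ?_, fun i => (z i).2, ?_, ?_⟩
    · rw [memdual]
      rintro w ⟨b, hb⟩
      have h := hz _ hb
      have := congrArg Prod.fst h
      simpa [Prod.fst_sum] using this
    · rw [memdual]
      rintro s ⟨a, b, hb, rfl⟩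
      have h := hz _ hb
      have := congrArg Prod.snd h
      simpa [Prod.snd_sum] using this
    · funext i
      simp [emb, Prod.smul_def, Prod.ext_iff]
  · rintro ⟨x, hx, y, hy, rfl⟩
    intro w hw
    have hx' : ∑ i, x i * (w i).1 = 0 := by
      apply hx (fun i => (w i).1)
      refine ⟨fun i => (w i).2 - (w i).1, ?_⟩
      convert hw using 1
      funext i; simp [Prod.ext_iff]
    have hy' : ∑ i, y i * (w i).2 = 0 := by
      apply hy (fun i => (w i).2)
      refine ⟨fun i => (w i).1, fun i => (w i).2 - (w i).1, ?_, ?_⟩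
      · convert hw using 1
        funext i; simp [Prod.ext_iff]
      · funext i; simp
    have : ∀ i, (((0, 1) : ZMod p × ZMod p) • emb y + ((1, 0) : ZMod p × ZMod p) • emb x) i * w i
        = (x i * (w i).1, y i * (w i).2) := by
      intro i
      simp [emb, Prod.smul_def, Prod.ext_iff]
    rw [Finset.sum_congr rfl (fun i _ => this i)]
    rw [Prod.ext_iff]
    simp [Prod.fst_sum, Prod.snd_sum, hx', hy']
end

section
/- Corollary 3.5: A linear code C of length n over R = F_p + vF_p is self-dual if and only if both C₁ and C₂ are self-dual codes over F_p (i.e. C₁ = C₁^⊥ and C₂ = C₂^⊥ in F_p^n). -/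
lemma mem_iff_proj {p n : ℕ} (C : Submodule (ZMod p × ZMod p) (Fin n → ZMod p × ZMod p))
    (u : Fin n → ZMod p × ZMod p) :
    u ∈ C ↔ (fun i => (u i).1) ∈ codeC1 C ∧ (fun i => (u i).2) ∈ codeC2 C := by
  constructor
  · intro hu
    have hu' : (fun i => ((u i).1, (u i).1 + ((u i).2 - (u i).1))) ∈ C := by
      convert hu using 1; funext i; simp
    exact ⟨⟨_, hu'⟩, ⟨_, _, hu', by funext i; simp⟩⟩
  · rintro ⟨⟨b, hb⟩, a, b', hb', hs⟩
    have h1 : ((1, 0) : ZMod p × ZMod p) • (fun i => ((u i).1, (u i).1 + b i)) ∈ C :=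
      C.smul_mem _ hb
    have h2 : ((0, 1) : ZMod p × ZMod p) • (fun i => (a i, a i + b' i)) ∈ C :=
      C.smul_mem _ hb'
    have := C.add_mem h1 h2
    convert this using 1
    funext i
    have := congrFun hs i
    simp only [Pi.add_apply] at this
    simp [Prod.ext_iff, Prod.smul_def, smul_eq_mul, ← this]

lemma mem_dual_iff_proj {p n : ℕ} (C : Submodule (ZMod p × ZMod p) (Fin n → ZMod p × ZMod p))
    (u : Fin n → ZMod p × ZMod p) :
    u ∈ dualCode C ↔
      (fun i => (u i).1) ∈ dualCode (codeC1 C) ∧ (fun i => (u i).2) ∈ dualCode (codeC2 C) := by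
  constructor
  · intro hu
    constructor
    · intro x hx
      have hw : (fun i => ((x i, 0) : ZMod p × ZMod p)) ∈ C := by
        rw [mem_iff_proj]
        exact ⟨hx, (codeC2 C).zero_mem⟩
      have := hu _ hw
      have := congrArg Prod.fst this
      simpa [Prod.fst_sum] using this
    · intro x hx
      have hw : (fun i => ((0, x i) : ZMod p × ZMod p)) ∈ C := by
        rw [mem_iff_proj]
        exact ⟨(codeC1 C).zero_mem, hx⟩
      have := hu _ hw
      have := congrArg Prod.snd this
      simpa [Prod.snd_sum] using this
  · rintro ⟨h1, h2⟩ w hw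
    rw [mem_iff_proj] at hw
    have e1 := h1 _ hw.1
    have e2 := h2 _ hw.2
    have : (∑ i, u i * w i) = (∑ i, (u i).1 * (w i).1, ∑ i, (u i).2 * (w i).2) := by
      rw [Prod.ext_iff]
      simp [Prod.fst_sum, Prod.snd_sum]
    rw [this, e1, e2]
    rfl

/-- Corollary 3.5: a linear code `C` of length `n` over `R = F_p + vF_p` is self-dual iff
both `C₁` and `C₂` are self-dual codes over `F_p`. -/
theorem selfDual_iff_C1_C2_selfDual (p n : ℕ) (hp : p.Prime)
    (C : Submodule (ZMod p × ZMod p) (Fin n → ZMod p × ZMod p)) :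
    C = dualCode C ↔ (codeC1 C = dualCode (codeC1 C) ∧ codeC2 C = dualCode (codeC2 C)) := by
  constructor
  · intro h
    constructor
    · ext x
      have hx : x ∈ codeC1 C ↔ (fun i => ((x i, 0) : ZMod p × ZMod p)) ∈ C := by
        rw [mem_iff_proj]
        simp only
        exact ⟨fun hx => ⟨hx, (codeC2 C).zero_mem⟩, fun h => h.1⟩
      rw [hx]; conv_lhs => rw [h]
      rw [mem_dual_iff_proj]
      simp only
      exact ⟨fun h => h.1, fun h => ⟨h, (dualCode (codeC2 C)).zero_mem⟩⟩
    · ext x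
      have hx : x ∈ codeC2 C ↔ (fun i => ((0, x i) : ZMod p × ZMod p)) ∈ C := by
        rw [mem_iff_proj]
        simp only
        exact ⟨fun hx => ⟨(codeC1 C).zero_mem, hx⟩, fun h => h.2⟩
      rw [hx]; conv_lhs => rw [h]
      rw [mem_dual_iff_proj]
      simp only
      exact ⟨fun h => h.2, fun h => ⟨(dualCode (codeC1 C)).zero_mem, h⟩⟩
  · rintro ⟨h1, h2⟩
    ext u
    rw [mem_iff_proj, mem_dual_iff_proj, ← h1, ← h2]
end

section
/- Theorem 4.1: Let p be a prime, ι a finite index type, and g₁, g₂ : ι → F_p^n families of vectors (e.g. the rows of generator matrices G₁ and G₂, padded with zero rows if they have different numbers of rows). Let 𝒞₁ and 𝒞₂ be the F_p-spans of the families g₁ and g₂ respectively, and let C be the R-submodule of R^n generated by the vectors v·ĝ₂(i) + (1-v)·ĝ₁(i) for i ∈ ι. Then C = v𝒞₂ ⊕ (1-v)𝒞₁ (i.e. C = {v·ŷ + (1-v)·x̂ : x ∈ 𝒞₁, y ∈ 𝒞₂}), the torsion code (C : v)^ equals 𝒞₂, and the torsion code (C : (1-v))‾ equals 𝒞₁.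 -/
/-- The submodule of pairs with components in given codes. -/
def pairCode {p n : ℕ} (D₁ D₂ : Submodule (ZMod p) (Fin n → ZMod p)) :
    Submodule (ZMod p × ZMod p) (Fin n → ZMod p × ZMod p) where
  carrier := {z | (fun j => (z j).1) ∈ D₁ ∧ (fun j => (z j).2) ∈ D₂}
  zero_mem' := ⟨D₁.zero_mem, D₂.zero_mem⟩
  add_mem' := by
    rintro a b ⟨ha1, ha2⟩ ⟨hb1, hb2⟩
    exact ⟨D₁.add_mem ha1 hb1, D₂.add_mem ha2 hb2⟩
  smul_mem' := by
    rintro ⟨c, d⟩ a ⟨ha1, ha2⟩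
    exact ⟨D₁.smul_mem c ha1, D₂.smul_mem d ha2⟩

lemma mem_span_mixed {p n : ℕ} {ι : Type*} (g₁ g₂ : ι → Fin n → ZMod p)
    (z : Fin n → ZMod p × ZMod p) :
    z ∈ Submodule.span (ZMod p × ZMod p)
        (Set.range fun i =>
          ((0, 1) : ZMod p × ZMod p) • emb (g₂ i) + ((1, 0) : ZMod p × ZMod p) • emb (g₁ i)) ↔
      (fun j => (z j).1) ∈ Submodule.span (ZMod p) (Set.range g₁) ∧
      (fun j => (z j).2) ∈ Submodule.span (ZMod p) (Set.range g₂) := by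
  set C := Submodule.span (ZMod p × ZMod p)
        (Set.range fun i =>
          ((0, 1) : ZMod p × ZMod p) • emb (g₂ i) + ((1, 0) : ZMod p × ZMod p) • emb (g₁ i))
  constructor
  · intro hz
    have : C ≤ pairCode (Submodule.span (ZMod p) (Set.range g₁))
        (Submodule.span (ZMod p) (Set.range g₂)) := by
      rw [Submodule.span_le]
      rintro _ ⟨i, rfl⟩
      constructor
      · have : (fun j => ((((0, 1) : ZMod p × ZMod p) • emb (g₂ i) +
            ((1, 0) : ZMod p × ZMod p) • emb (g₁ i)) j).1) = g₁ i := by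
          funext j; simp [emb, Prod.smul_def]
        rw [this]
        exact Submodule.subset_span ⟨i, rfl⟩
      · have : (fun j => ((((0, 1) : ZMod p × ZMod p) • emb (g₂ i) +
            ((1, 0) : ZMod p × ZMod p) • emb (g₁ i)) j).2) = g₂ i := by
          funext j; simp [emb, Prod.smul_def]
        rw [this]
        exact Submodule.subset_span ⟨i, rfl⟩
    exact this hz
  · rintro ⟨h1, h2⟩
    have key1 : ∀ x ∈ Submodule.span (ZMod p) (Set.range g₁),
        ((1, 0) : ZMod p × ZMod p) • emb x ∈ C := by
      intro x hx
      induction hx using Submodule.span_induction with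
      | mem w hw =>
        obtain ⟨i, rfl⟩ := hw
        have : ((1, 0) : ZMod p × ZMod p) • emb (g₁ i) =
            ((1, 0) : ZMod p × ZMod p) • (((0, 1) : ZMod p × ZMod p) • emb (g₂ i) +
              ((1, 0) : ZMod p × ZMod p) • emb (g₁ i)) := by
          funext j; simp [emb, Prod.smul_def]
        rw [this]
        exact C.smul_mem _ (Submodule.subset_span ⟨i, rfl⟩)
      | zero =>
        have : ((1, 0) : ZMod p × ZMod p) • emb (0 : Fin n → ZMod p) = 0 := by
          funext j; simp [emb, Prod.smul_def]
        rw [this]; exact C.zero_mem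
      | add a b _ _ ha hb =>
        have : ((1, 0) : ZMod p × ZMod p) • emb (a + b) =
            ((1, 0) : ZMod p × ZMod p) • emb a + ((1, 0) : ZMod p × ZMod p) • emb b := by
          funext j; simp [emb, Prod.smul_def, Prod.ext_iff]
        rw [this]; exact C.add_mem ha hb
      | smul c a _ ha =>
        have : ((1, 0) : ZMod p × ZMod p) • emb (c • a) =
            ((c, 0) : ZMod p × ZMod p) • (((1, 0) : ZMod p × ZMod p) • emb a) := by
          funext j; simp [emb, Prod.smul_def, Prod.ext_iff]
        rw [this]; exact C.smul_mem _ ha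
    have key2 : ∀ y ∈ Submodule.span (ZMod p) (Set.range g₂),
        ((0, 1) : ZMod p × ZMod p) • emb y ∈ C := by
      intro y hy
      induction hy using Submodule.span_induction with
      | mem w hw =>
        obtain ⟨i, rfl⟩ := hw
        have : ((0, 1) : ZMod p × ZMod p) • emb (g₂ i) =
            ((0, 1) : ZMod p × ZMod p) • (((0, 1) : ZMod p × ZMod p) • emb (g₂ i) +
              ((1, 0) : ZMod p × ZMod p) • emb (g₁ i)) := by
          funext j; simp [emb, Prod.smul_def]
        rw [this]
        exact C.smul_mem _ (Submodule.subset_span ⟨i, rfl⟩)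
      | zero =>
        have : ((0, 1) : ZMod p × ZMod p) • emb (0 : Fin n → ZMod p) = 0 := by
          funext j; simp [emb, Prod.smul_def]
        rw [this]; exact C.zero_mem
      | add a b _ _ ha hb =>
        have : ((0, 1) : ZMod p × ZMod p) • emb (a + b) =
            ((0, 1) : ZMod p × ZMod p) • emb a + ((0, 1) : ZMod p × ZMod p) • emb b := by
          funext j; simp [emb, Prod.smul_def, Prod.ext_iff]
        rw [this]; exact C.add_mem ha hb
      | smul c a _ ha =>
        have : ((0, 1) : ZMod p × ZMod p) • emb (c • a) =
            ((0, c) : ZMod p × ZMod p) • (((0, 1) : ZMod p × ZMod p) • emb a) := by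
          funext j; simp [emb, Prod.smul_def, Prod.ext_iff]
        rw [this]; exact C.smul_mem _ ha
    have hz : z = ((0, 1) : ZMod p × ZMod p) • emb (fun j => (z j).2) +
        ((1, 0) : ZMod p × ZMod p) • emb (fun j => (z j).1) := by
      funext j; simp [emb, Prod.smul_def, Prod.ext_iff]
    rw [hz]
    exact C.add_mem (key2 _ h2) (key1 _ h1)

/-- Theorem 4.1: given families `g₁, g₂ : ι → F_p^n` spanning codes `𝒞₁, 𝒞₂` over `F_p`,
the `R`-code `C` generated by the vectors `v·ĝ₂(i) + (1-v)·ĝ₁(i)` satisfies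
`C = v𝒞₂ ⊕ (1-v)𝒞₁`, `(C : v)^ = 𝒞₂` and `(C : (1-v))‾ = 𝒞₁`. -/
theorem span_of_mixed_generators (p n : ℕ) (hp : p.Prime) (ι : Type*) [Fintype ι]
    (g₁ g₂ : ι → Fin n → ZMod p) :
    let 𝒞₁ : Submodule (ZMod p) (Fin n → ZMod p) := Submodule.span (ZMod p) (Set.range g₁)
    let 𝒞₂ : Submodule (ZMod p) (Fin n → ZMod p) := Submodule.span (ZMod p) (Set.range g₂)
    let C : Submodule (ZMod p × ZMod p) (Fin n → ZMod p × ZMod p) :=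
      Submodule.span (ZMod p × ZMod p)
        (Set.range fun i =>
          ((0, 1) : ZMod p × ZMod p) • emb (g₂ i) + ((1, 0) : ZMod p × ZMod p) • emb (g₁ i))
    ((C : Set (Fin n → ZMod p × ZMod p)) =
        {z | ∃ x ∈ 𝒞₁, ∃ y ∈ 𝒞₂,
          z = ((0, 1) : ZMod p × ZMod p) • emb y + ((1, 0) : ZMod p × ZMod p) • emb x}) ∧
      (fun x : Fin n → ZMod p × ZMod p => fun i => (x i).2) ''
          {x : Fin n → ZMod p × ZMod p | ((0, 1) : ZMod p × ZMod p) • x ∈ C} =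
        (𝒞₂ : Set (Fin n → ZMod p)) ∧
      (fun x : Fin n → ZMod p × ZMod p => fun i => (x i).1) ''
          {x : Fin n → ZMod p × ZMod p | ((1, 0) : ZMod p × ZMod p) • x ∈ C} =
        (𝒞₁ : Set (Fin n → ZMod p)) := by
  
  intro 𝒞₁ 𝒞₂ C
  have decomp : ∀ z : Fin n → ZMod p × ZMod p,
      z = ((0, 1) : ZMod p × ZMod p) • emb (fun j => (z j).2) +
        ((1, 0) : ZMod p × ZMod p) • emb (fun j => (z j).1) := by
    intro z; funext j; simp [emb, Prod.smul_def, Prod.ext_iff]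
  refine ⟨?_, ?_, ?_⟩
  · ext z
    rw [SetLike.mem_coe, mem_span_mixed]
    constructor
    · rintro ⟨h1, h2⟩
      exact ⟨_, h1, _, h2, decomp z⟩
    · rintro ⟨x, hx, y, hy, rfl⟩
      constructor
      · have : (fun j => ((((0, 1) : ZMod p × ZMod p) • emb y +
            ((1, 0) : ZMod p × ZMod p) • emb x) j).1) = x := by
          funext j; simp [emb, Prod.smul_def]
        rw [this]; exact hx
      · have : (fun j => ((((0, 1) : ZMod p × ZMod p) • emb y +
            ((1, 0) : ZMod p × ZMod p) • emb x) j).2) = y := by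
          funext j; simp [emb, Prod.smul_def]
        rw [this]; exact hy
  · ext s
    constructor
    · rintro ⟨x, hx, rfl⟩
      have h2 := ((mem_span_mixed g₁ g₂ _).mp hx).2
      have e : (fun j => (((0, 1) : ZMod p × ZMod p) • x) j |>.2) = fun i => (x i).2 := by
        funext j; simp [Prod.smul_def]
      rw [e] at h2; exact h2
    · intro hs
      refine ⟨emb s, (mem_span_mixed g₁ g₂ _).mpr ⟨?_, ?_⟩, rfl⟩
      · have : (fun j => ((((0, 1) : ZMod p × ZMod p) • emb s) j).1) =
            (0 : Fin n → ZMod p) := by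
          funext j; simp [emb, Prod.smul_def]
        rw [this]; exact 𝒞₁.zero_mem
      · have : (fun j => ((((0, 1) : ZMod p × ZMod p) • emb s) j).2) = s := by
          funext j; simp [emb, Prod.smul_def]
        rw [this]; exact hs
  · ext s
    constructor
    · rintro ⟨x, hx, rfl⟩
      have h1 := ((mem_span_mixed g₁ g₂ _).mp hx).1
      have e : (fun j => (((1, 0) : ZMod p × ZMod p) • x) j |>.1) = fun i => (x i).1 := by
        funext j; simp [Prod.smul_def]
      rw [e] at h1; exact h1
    · intro hs
      refine ⟨emb s, (mem_span_mixed g₁ g₂ _).mpr ⟨?_, ?_⟩, rfl⟩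
      · have : (fun j => ((((1, 0) : ZMod p × ZMod p) • emb s) j).1) = s := by
          funext j; simp [emb, Prod.smul_def]
        rw [this]; exact hs
      · have : (fun j => ((((1, 0) : ZMod p × ZMod p) • emb s) j).2) =
            (0 : Fin n → ZMod p) := by
          funext j; simp [emb, Prod.smul_def]
        rw [this]; exact 𝒞₂.zero_mem
end

section
/- Corollary 4.2: Let p be a prime and let 𝒞₁ and 𝒞₂ be self-dual codes of length n over F_p, spanned by families g₁, g₂ : ι → F_p^n respectively (the rows of generator matrices G₁ and G₂, which have the same number of rows since dim 𝒞₁ = dim 𝒞₂ = n/2). Then the R-submodule C of R^n generated by the vectors v·ĝ₂(i) + (1-v)·ĝ₁(i) for i ∈ ι (the rows of G = vG₂ + (1-v)G₁) is a self-dual code over R, i.e. C = C^⊥. -/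
section Aux

variable {p n : ℕ} {ι : Type*} [Fintype ι]

lemma mem_mixed_span (g₁ g₂ : ι → Fin n → ZMod p) (x : Fin n → ZMod p × ZMod p) :
    x ∈ Submodule.span (ZMod p × ZMod p)
        (Set.range fun i =>
          ((0, 1) : ZMod p × ZMod p) • emb (g₂ i) + ((1, 0) : ZMod p × ZMod p) • emb (g₁ i)) ↔
    (fun j => (x j).1) ∈ Submodule.span (ZMod p) (Set.range g₁) ∧
    (fun j => (x j).2) ∈ Submodule.span (ZMod p) (Set.range g₂) := by
  constructor
  · intro h
    induction h using Submodule.span_induction with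
    | mem y hy =>
      obtain ⟨i, rfl⟩ := hy
      constructor
      · refine Submodule.subset_span ⟨i, ?_⟩
        funext j; simp [emb, Prod.smul_def]
      · refine Submodule.subset_span ⟨i, ?_⟩
        funext j; simp [emb, Prod.smul_def]
    | zero => exact ⟨Submodule.zero_mem _, Submodule.zero_mem _⟩
    | add y z hy hz ihy ihz =>
      exact ⟨Submodule.add_mem _ ihy.1 ihz.1, Submodule.add_mem _ ihy.2 ihz.2⟩
    | smul c y hy ih =>
      exact ⟨Submodule.smul_mem _ c.1 ih.1, Submodule.smul_mem _ c.2 ih.2⟩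
  · rintro ⟨h1, h2⟩
    have key1 : ∀ a : Fin n → ZMod p, a ∈ Submodule.span (ZMod p) (Set.range g₁) →
        (fun j => ((a j, 0) : ZMod p × ZMod p)) ∈ Submodule.span (ZMod p × ZMod p)
        (Set.range fun i =>
          ((0, 1) : ZMod p × ZMod p) • emb (g₂ i) + ((1, 0) : ZMod p × ZMod p) • emb (g₁ i)) := by
      intro a ha
      induction ha using Submodule.span_induction with
      | mem y hy =>
        obtain ⟨i, rfl⟩ := hy
        have hgen : (fun j => ((0, 1) : ZMod p × ZMod p) • emb (g₂ i) j +
              ((1, 0) : ZMod p × ZMod p) • emb (g₁ i) j) ∈ Submodule.span (ZMod p × ZMod p)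
            (Set.range fun i =>
              ((0, 1) : ZMod p × ZMod p) • emb (g₂ i) + ((1, 0) : ZMod p × ZMod p) • emb (g₁ i)) :=
          Submodule.subset_span ⟨i, rfl⟩
        have := Submodule.smul_mem _ ((1,0) : ZMod p × ZMod p) hgen
        convert this using 1
        funext j; simp [emb, Prod.smul_def, Prod.ext_iff]
      | zero =>
        exact Submodule.zero_mem _
      | add y z hy hz ihy ihz =>
        convert Submodule.add_mem _ ihy ihz using 1
        funext j; simp [Prod.ext_iff]
      | smul c y hy ih =>
        convert Submodule.smul_mem _ ((c, c) : ZMod p × ZMod p) ih using 1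
        funext j; simp [Prod.smul_def, Prod.ext_iff, smul_eq_mul]
    have key2 : ∀ b : Fin n → ZMod p, b ∈ Submodule.span (ZMod p) (Set.range g₂) →
        (fun j => ((0, b j) : ZMod p × ZMod p)) ∈ Submodule.span (ZMod p × ZMod p)
        (Set.range fun i =>
          ((0, 1) : ZMod p × ZMod p) • emb (g₂ i) + ((1, 0) : ZMod p × ZMod p) • emb (g₁ i)) := by
      intro b hb
      induction hb using Submodule.span_induction with
      | mem y hy =>
        obtain ⟨i, rfl⟩ := hy
        have hgen : (fun j => ((0, 1) : ZMod p × ZMod p) • emb (g₂ i) j +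
              ((1, 0) : ZMod p × ZMod p) • emb (g₁ i) j) ∈ Submodule.span (ZMod p × ZMod p)
            (Set.range fun i =>
              ((0, 1) : ZMod p × ZMod p) • emb (g₂ i) + ((1, 0) : ZMod p × ZMod p) • emb (g₁ i)) :=
          Submodule.subset_span ⟨i, rfl⟩
        have := Submodule.smul_mem _ ((0,1) : ZMod p × ZMod p) hgen
        convert this using 1
        funext j; simp [emb, Prod.smul_def, Prod.ext_iff]
      | zero =>
        exact Submodule.zero_mem _
      | add y z hy hz ihy ihz =>
        convert Submodule.add_mem _ ihy ihz using 1
        funext j; simp [Prod.ext_iff]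
      | smul c y hy ih =>
        convert Submodule.smul_mem _ ((c, c) : ZMod p × ZMod p) ih using 1
        funext j; simp [Prod.smul_def, Prod.ext_iff, smul_eq_mul]
    have := Submodule.add_mem _ (key1 _ h1) (key2 _ h2)
    convert this using 1
    funext j; simp [Prod.ext_iff]

lemma mem_dual_prod (D₁ D₂ : Submodule (ZMod p) (Fin n → ZMod p))
    (C : Submodule (ZMod p × ZMod p) (Fin n → ZMod p × ZMod p))
    (hC : ∀ x, x ∈ C ↔ (fun j => (x j).1) ∈ D₁ ∧ (fun j => (x j).2) ∈ D₂)
    (u : Fin n → ZMod p × ZMod p) :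
    u ∈ dualCode C ↔ (fun j => (u j).1) ∈ dualCode D₁ ∧ (fun j => (u j).2) ∈ dualCode D₂ := by
  constructor
  · intro hu
    constructor
    · intro w hw
      have hmem : (fun j => ((w j, 0) : ZMod p × ZMod p)) ∈ C := by
        rw [hC]; exact ⟨hw, D₂.zero_mem⟩
      have := hu _ hmem
      have := congrArg Prod.fst this
      simpa [Prod.fst_sum] using this
    · intro w hw
      have hmem : (fun j => ((0, w j) : ZMod p × ZMod p)) ∈ C := by
        rw [hC]; exact ⟨D₁.zero_mem, hw⟩
      have := hu _ hmem
      have := congrArg Prod.snd this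
      simpa [Prod.snd_sum] using this
  · rintro ⟨h1, h2⟩ w hw
    rw [hC] at hw
    have e1 := h1 _ hw.1
    have e2 := h2 _ hw.2
    rw [Prod.ext_iff]
    constructor
    · simpa [Prod.fst_sum] using e1
    · simpa [Prod.snd_sum] using e2

end Aux

/-- Corollary 4.2: if `𝒞₁` and `𝒞₂` are self-dual codes of length `n` over `F_p` spanned by
the families `g₁` and `g₂` (the rows of generator matrices `G₁` and `G₂`), then the `R`-code
generated by the rows of `G = vG₂ + (1-v)G₁` is self-dual. -/
theorem selfDual_of_mixed_generators (p n : ℕ) (hp : p.Prime) (ι : Type*) [Fintype ι]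
    (g₁ g₂ : ι → Fin n → ZMod p)
    (𝒞₁ 𝒞₂ : Submodule (ZMod p) (Fin n → ZMod p))
    (hg₁ : Submodule.span (ZMod p) (Set.range g₁) = 𝒞₁)
    (hg₂ : Submodule.span (ZMod p) (Set.range g₂) = 𝒞₂)
    (h₁ : 𝒞₁ = dualCode 𝒞₁) (h₂ : 𝒞₂ = dualCode 𝒞₂) :
    let C : Submodule (ZMod p × ZMod p) (Fin n → ZMod p × ZMod p) :=
      Submodule.span (ZMod p × ZMod p)
        (Set.range fun i =>
          ((0, 1) : ZMod p × ZMod p) • emb (g₂ i) + ((1, 0) : ZMod p × ZMod p) • emb (g₁ i))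
    C = dualCode C := by
  intro C
  have hC : ∀ x, x ∈ C ↔ (fun j => (x j).1) ∈ 𝒞₁ ∧ (fun j => (x j).2) ∈ 𝒞₂ := by
    intro x
    rw [← hg₁, ← hg₂]
    exact mem_mixed_span g₁ g₂ x
  ext u
  rw [hC, mem_dual_prod 𝒞₁ 𝒞₂ C hC, ← h₁, ← h₂]
end

section
/- Corollary 4.4: For every prime p and every length n, the number of self-dual codes of length n over R = F_p + vF_p equals the square of the number of self-dual codes of length n over F_p; that is, N(R) = N(F_p)², where N(R) is the cardinality of the set of R-submodules C of R^n with C = C^⊥ and N(F_p) is the cardinality of the set of F_p-subspaces D of F_p^n with D = D^⊥. -/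
/-! Since `R = F_p × F_p`, an `R`-submodule `C ⊆ R^n` is the product `D₁ × D₂` of its two
coordinate projections, each an `F_p`-code, and this correspondence is a bijection. The inner
product on `R^n` is computed componentwise, so `(D₁ × D₂)^⊥ = D₁^⊥ × D₂^⊥`; hence `C` is self-dual
exactly when both `D₁` and `D₂` are. -/

namespace ProdCode

variable {S T ι : Type*} [CommRing S] [CommRing T]

def fstCode (C : Submodule (S × T) (ι → S × T)) : Submodule S (ι → S) where
  carrier := {x | ∃ u ∈ C, (fun i => (u i).1) = x}
  zero_mem' := ⟨0, C.zero_mem, rfl⟩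
  add_mem' := by
    rintro _ _ ⟨u, hu, rfl⟩ ⟨v, hv, rfl⟩
    exact ⟨u + v, C.add_mem hu hv, rfl⟩
  smul_mem' := by
    rintro c _ ⟨u, hu, rfl⟩
    refine ⟨((c, 0) : S × T) • u, C.smul_mem _ hu, ?_⟩
    funext i
    simp

def sndCode (C : Submodule (S × T) (ι → S × T)) : Submodule T (ι → T) where
  carrier := {x | ∃ u ∈ C, (fun i => (u i).2) = x}
  zero_mem' := ⟨0, C.zero_mem, rfl⟩
  add_mem' := by
    rintro _ _ ⟨u, hu, rfl⟩ ⟨v, hv, rfl⟩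
    exact ⟨u + v, C.add_mem hu hv, rfl⟩
  smul_mem' := by
    rintro c _ ⟨u, hu, rfl⟩
    refine ⟨((0, c) : S × T) • u, C.smul_mem _ hu, ?_⟩
    funext i
    simp

def prodCode (D₁ : Submodule S (ι → S)) (D₂ : Submodule T (ι → T)) :
    Submodule (S × T) (ι → S × T) where
  carrier := {u | (fun i => (u i).1) ∈ D₁ ∧ (fun i => (u i).2) ∈ D₂}
  zero_mem' := ⟨D₁.zero_mem, D₂.zero_mem⟩
  add_mem' := fun ⟨h₁, h₂⟩ ⟨g₁, g₂⟩ => ⟨D₁.add_mem h₁ g₁, D₂.add_mem h₂ g₂⟩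
  smul_mem' := fun c _ ⟨h₁, h₂⟩ => ⟨D₁.smul_mem c.1 h₁, D₂.smul_mem c.2 h₂⟩

theorem fstCode_prodCode (D₁ : Submodule S (ι → S)) (D₂ : Submodule T (ι → T)) :
    fstCode (prodCode D₁ D₂) = D₁ := by
  ext x
  refine ⟨fun ⟨_, hu, hx⟩ => hx ▸ hu.1, fun hx => ⟨fun i => (x i, 0), ⟨hx, D₂.zero_mem⟩, rfl⟩⟩

theorem sndCode_prodCode (D₁ : Submodule S (ι → S)) (D₂ : Submodule T (ι → T)) :
    sndCode (prodCode D₁ D₂) = D₂ := by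
  ext x
  refine ⟨fun ⟨_, hu, hx⟩ => hx ▸ hu.2, fun hx => ⟨fun i => (0, x i), ⟨D₁.zero_mem, hx⟩, rfl⟩⟩

theorem prodCode_fstCode_sndCode (C : Submodule (S × T) (ι → S × T)) :
    prodCode (fstCode C) (sndCode C) = C := by
  ext u
  refine ⟨?_, fun hu => ⟨⟨u, hu, rfl⟩, ⟨u, hu, rfl⟩⟩⟩
  rintro ⟨⟨v, hv, hv₁⟩, ⟨w, hw, hw₂⟩⟩
  -- the idempotents `(1, 0)` and `(0, 1)` cut out the two halves of `u` from `v` and `w`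
  have hu : u = ((1, 0) : S × T) • v + ((0, 1) : S × T) • w := by
    funext i
    ext
    · simpa using (congrFun hv₁ i).symm
    · simpa using (congrFun hw₂ i).symm
  exact hu ▸ C.add_mem (C.smul_mem _ hv) (C.smul_mem _ hw)

def codeEquiv : Submodule (S × T) (ι → S × T) ≃ Submodule S (ι → S) × Submodule T (ι → T) where
  toFun C := (fstCode C, sndCode C)
  invFun D := prodCode D.1 D.2
  left_inv := prodCode_fstCode_sndCode
  right_inv D := Prod.ext (fstCode_prodCode D.1 D.2) (sndCode_prodCode D.1 D.2)

variable [Fintype ι]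

theorem dualCode_prodCode (D₁ : Submodule S (ι → S)) (D₂ : Submodule T (ι → T)) :
    dualCode (prodCode D₁ D₂) = prodCode (dualCode D₁) (dualCode D₂) := by
  ext u
  constructor
  · intro hu
    constructor
    · intro x hx
      simpa [Prod.fst_sum] using congrArg Prod.fst (hu (fun i => (x i, 0)) ⟨hx, D₂.zero_mem⟩)
    · intro y hy
      simpa [Prod.snd_sum] using congrArg Prod.snd (hu (fun i => (0, y i)) ⟨D₁.zero_mem, hy⟩)
  · rintro ⟨h₁, h₂⟩ w ⟨hw₁, hw₂⟩
    ext
    · simpa [Prod.fst_sum] using h₁ _ hw₁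
    · simpa [Prod.snd_sum] using h₂ _ hw₂

theorem codeEquiv_dualCode (C : Submodule (S × T) (ι → S × T)) :
    codeEquiv (dualCode C) = (dualCode (fstCode C), dualCode (sndCode C)) := by
  conv_lhs => rw [← prodCode_fstCode_sndCode C, dualCode_prodCode]
  exact Prod.ext (fstCode_prodCode _ _) (sndCode_prodCode _ _)

theorem selfDual_iff (C : Submodule (S × T) (ι → S × T)) :
    C = dualCode C ↔ fstCode C = dualCode (fstCode C) ∧ sndCode C = dualCode (sndCode C) := by
  rw [← (codeEquiv (ι := ι)).apply_eq_iff_eq, codeEquiv_dualCode, Prod.ext_iff]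
  rfl

def selfDualEquiv :
    {C : Submodule (S × T) (ι → S × T) // C = dualCode C} ≃
      {D : Submodule S (ι → S) // D = dualCode D} × {D : Submodule T (ι → T) // D = dualCode D} :=
  (codeEquiv.subtypeEquiv selfDual_iff).trans Equiv.subtypeProdEquivProd

end ProdCode

theorem card_selfDual_codes_general (p n : ℕ) :
    Nat.card {C : Submodule (ZMod p × ZMod p) (Fin n → ZMod p × ZMod p) // C = dualCode C} =
      Nat.card {D : Submodule (ZMod p) (Fin n → ZMod p) // D = dualCode D} ^ 2 := by
  rw [Nat.card_congr ProdCode.selfDualEquiv, Nat.card_prod, sq]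

/-- Corollary 4.4: the number of self-dual codes of length `n` over `R = F_p + vF_p` equals
the square of the number of self-dual codes of length `n` over `F_p`. -/
theorem card_selfDual_codes (p n : ℕ) (hp : p.Prime) :
    Nat.card {C : Submodule (ZMod p × ZMod p) (Fin n → ZMod p × ZMod p) // C = dualCode C} =
      Nat.card {D : Submodule (ZMod p) (Fin n → ZMod p) // D = dualCode D} ^ 2 :=
  card_selfDual_codes_general p n
end

section
/- Appendix claim (key computation for Theorem 3.2(1)): Let p be an odd prime, let k₁, k₂, k₃, m₁, m₂ be natural numbers, n = k₁ + k₂ + k₃ + m₁ + m₂ and k = k₁ + k₂ + k₃. Let A₁ (k₁×k₃), B₁ (k₁×k₂), A₂, B₂ (k₁×m₁), A₃, B₃ (k₁×m₂), A₄ (k₂×m₁), B₄ (k₃×m₂) be matrices over F_p, regarded as matrices over R via c ↦ (c,c). Define the k×n block matrix G = [ I_{k₁} | (1-v)B₁ | vA₁ | vA₂+(1-v)B₂ | vA₃+(1-v)B₃ ; 0 | vI_{k₂} | 0 | vA₄ | 0 ; 0 | 0 | (1-v)I_{k₃} | 0 | (1-v)B₄ ] (column blocks k₁, k₂, k₃,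 m₁, m₂), and with E₁ = (−A₂ | A₁B₄ − A₃)ᵀ, E₂ = (B₁A₄ − B₂ | −B₃)ᵀ, P = (−A₄ | 0)ᵀ, Q = (0 | −B₄)ᵀ define the (n−k+k₃+k₂)×n block matrix H = [ vE₁+(1-v)E₂ | P | Q | I_{n−k} ; v(−A₁ᵀ) | 0 | vI_{k₃} | 0 ; (1-v)(−B₁ᵀ) | (1-v)I_{k₂} | 0 | 0 ] (column blocks k₁, k₂, k₃, n−k). Then H · Gᵀ = 0. -/
open Matrix

variable (p : ℕ)

variable {k₁ k₂ k₃ m₁ m₂ : ℕ}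
  (A₁ : Matrix (Fin k₁) (Fin k₃) (ZMod p)) (B₁ : Matrix (Fin k₁) (Fin k₂) (ZMod p))
  (A₂ B₂ : Matrix (Fin k₁) (Fin m₁) (ZMod p)) (A₃ B₃ : Matrix (Fin k₁) (Fin m₂) (ZMod p))
  (A₄ : Matrix (Fin k₂) (Fin m₁) (ZMod p)) (B₄ : Matrix (Fin k₃) (Fin m₂) (ZMod p))

/-! Since `R = F_p × F_p`, a matrix over `R` vanishes as soon as both coordinate projections of
it do. The first projection sends `v ↦ 0, 1 - v ↦ 1` and the second `v ↦ 1, 1 - v ↦ 0`, so the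
projections of `H` and `G` are block matrices over `F_p`, and `H Gᵀ` projects to products of
block matrices whose blocks cancel, e.g. `E₂ + P B₁ᵀ + (B₂ | B₃)ᵀ = 0` and
`E₁ + Q A₁ᵀ + (A₂ | A₃)ᵀ = 0`. -/

namespace Matrix

variable {R : Type*} {m n m₁ m₂ n₁ n₂ : Type*}

lemma fromRows_add_fromRows [Add R] (A₁ B₁ : Matrix m₁ n R) (A₂ B₂ : Matrix m₂ n R) :
    fromRows A₁ A₂ + fromRows B₁ B₂ = fromRows (A₁ + B₁) (A₂ + B₂) := by
  ext (_ | _) _ <;> rfl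

lemma eq_zero_of_map_fst_of_map_snd {S T : Type*} [Zero S] [Zero T] {M : Matrix m n (S × T)}
    (h₁ : M.map Prod.fst = 0) (h₂ : M.map Prod.snd = 0) : M = 0 := by
  ext i j : 1
  exact Prod.ext (congrFun₂ h₁ i j) (congrFun₂ h₂ i j)

end Matrix

lemma Gmat_map_fst : (Gmat p A₁ B₁ A₂ B₂ A₃ B₃ A₄ B₄).map Prod.fst =
    fromRows (fromCols 1 (fromCols B₁ (fromCols 0 (fromCols B₂ B₃))))
      (fromRows 0 (fromCols 0 (fromCols 0 (fromCols 1 (fromCols 0 B₄))))) := by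
  ext (i | i | i) (j | j | j | j | j) <;> simp [Gmat, vR, uR, eR, one_apply, apply_ite Prod.fst]

lemma Gmat_map_snd : (Gmat p A₁ B₁ A₂ B₂ A₃ B₃ A₄ B₄).map Prod.snd =
    fromRows (fromCols 1 (fromCols 0 (fromCols A₁ (fromCols A₂ A₃))))
      (fromRows (fromCols 0 (fromCols 1 (fromCols 0 (fromCols A₄ 0)))) 0) := by
  ext (i | i | i) (j | j | j | j | j) <;> simp [Gmat, vR, uR, eR, one_apply, apply_ite Prod.snd]

lemma Hmat_map_fst : (Hmat p A₁ B₁ A₂ B₂ A₃ B₃ A₄ B₄).map Prod.fst =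
    fromRows (fromCols (E₂mat p B₁ B₂ B₃ A₄) (fromCols (Pmat p A₄) (fromCols (Qmat p B₄) 1)))
      (fromRows 0 (fromCols (-B₁ᵀ) (fromCols 1 0))) := by
  ext ((i | i) | i | i) (j | j | j | j | j) <;>
    simp [Hmat, vR, uR, eR, one_apply, apply_ite Prod.fst]

lemma Hmat_map_snd : (Hmat p A₁ B₁ A₂ B₂ A₃ B₃ A₄ B₄).map Prod.snd =
    fromRows (fromCols (E₁mat p A₁ A₂ A₃ B₄) (fromCols (Pmat p A₄) (fromCols (Qmat p B₄) 1)))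
      (fromRows (fromCols (-A₁ᵀ) (fromCols 0 (fromCols 1 0))) 0) := by
  ext ((i | i) | i | i) (j | j | j | j | j) <;>
    simp [Hmat, vR, uR, eR, one_apply, apply_ite Prod.snd]

lemma Hmat_mul_Gmat_transpose_map_fst :
    (Hmat p A₁ B₁ A₂ B₂ A₃ B₃ A₄ B₄ * (Gmat p A₁ B₁ A₂ B₂ A₃ B₃ A₄ B₄)ᵀ).map Prod.fst = 0 := by
  rw [← RingHom.coe_fst, Matrix.map_mul, transpose_map, RingHom.coe_fst, Hmat_map_fst,
    Gmat_map_fst]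
  simp [transpose_fromRows, transpose_fromCols, fromCols_mul_fromRows, fromRows_add_fromRows,
    E₂mat, Pmat, Qmat]

lemma Hmat_mul_Gmat_transpose_map_snd :
    (Hmat p A₁ B₁ A₂ B₂ A₃ B₃ A₄ B₄ * (Gmat p A₁ B₁ A₂ B₂ A₃ B₃ A₄ B₄)ᵀ).map Prod.snd = 0 := by
  rw [← RingHom.coe_snd, Matrix.map_mul, transpose_map, RingHom.coe_snd, Hmat_map_snd,
    Gmat_map_snd]
  simp [transpose_fromRows, transpose_fromCols, fromCols_mul_fromRows, fromRows_add_fromRows,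
    E₁mat, Pmat, Qmat]

theorem H_mul_G_transpose_eq_zero :
    Hmat p A₁ B₁ A₂ B₂ A₃ B₃ A₄ B₄ * (Gmat p A₁ B₁ A₂ B₂ A₃ B₃ A₄ B₄)ᵀ = 0 :=
  eq_zero_of_map_fst_of_map_snd (Hmat_mul_Gmat_transpose_map_fst p A₁ B₁ A₂ B₂ A₃ B₃ A₄ B₄)
    (Hmat_mul_Gmat_transpose_map_snd p A₁ B₁ A₂ B₂ A₃ B₃ A₄ B₄)
end
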